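/- arXiv:1304.2585 — 2 statements merged into one kernel-verified Lean document; each statement's English description precedes it below -/
import Mathlib

section
/- For d ≥ 2 and n ≥ 0, the dimension of the space H_n^d of real harmonic polynomials homogeneous of degree n in d variables equals binom(n+d−1, n) − binom(n+d−3, n−2), where the second binomial coefficient is interpreted as 0 when n = 0 or n = 1. -/
/-!
The Laplacian maps homogeneous polynomials of degree `m + 2` onto those of degree `m`, and its
kernel there is `H_{m+2}^d`; hence `dim H_{m+2}^d = dim P_{m+2} - dim P_m`, where
`dim P_n = C(n+d-1, n)` counts monomials. Surjectivity comes from the identity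
`Δ(|x|² q) = (2d + 4m) q + |x|² Δq` for `q` homogeneous of degree `m` (Euler's identity): solving
`a q + |x|² Δq = y` for `a > 0` by induction on the degree gives the preimage `|x|² q` of `y`.
In degrees `0` and `1` every homogeneous polynomial is harmonic.
-/

open MeasureTheory MvPolynomial Metric

/-- The polynomial Laplacian `Δ = ∂₁² + ⋯ + ∂_d²` as a linear map. -/
noncomputable def polyLaplacian (d : ℕ) : MvPolynomial (Fin d) ℝ →ₗ[ℝ] MvPolynomial (Fin d) ℝ :=
  ∑ i : Fin d, ((pderiv i).toLinearMap ∘ₗ (pderiv i).toLinearMap)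

/-- The space `H_n^d` of real harmonic polynomials in `d` variables,
homogeneous of degree `n`. -/
noncomputable def harmonicSubmodule (d n : ℕ) : Submodule ℝ (MvPolynomial (Fin d) ℝ) :=
  homogeneousSubmodule (Fin d) ℝ n ⊓ LinearMap.ker (polyLaplacian d)

theorem LinearMap.finrank_map_add_finrank_inf_ker {K V W : Type*} [DivisionRing K]
    [AddCommGroup V] [Module K V] [AddCommGroup W] [Module K W] (f : V →ₗ[K] W)
    (p : Submodule K V) [FiniteDimensional K p] :
    Module.finrank K (p.map f) + Module.finrank K ↥(p ⊓ LinearMap.ker f) =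
      Module.finrank K p := by
  have h := (f.domRestrict p).finrank_range_add_finrank_ker
  rw [LinearMap.range_domRestrict, LinearMap.ker_domRestrict] at h
  have hker : (LinearMap.ker f).comap p.subtype = (p ⊓ LinearMap.ker f).comap p.subtype := by
    rw [Submodule.comap_inf, Submodule.comap_subtype_self, top_inf_eq]
  rwa [hker, (Submodule.comapSubtypeEquivOfLe inf_le_left).finrank_eq] at h

namespace MvPolynomial

variable {σ R : Type*}

theorem natCard_setOf_degree_eq [Fintype σ] (n : ℕ) :
    Nat.card {u : σ →₀ ℕ | u.degree = n} = (Fintype.card σ + n - 1).choose n := by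
  classical
  have e : Sym σ n ≃ {u : σ →₀ ℕ | u.degree = n} := Sym.equivNatSum σ n
  rw [← Nat.card_congr e, Nat.card_eq_fintype_card, Sym.card_sym_eq_choose]

theorem finrank_homogeneousSubmodule [Fintype σ] [CommRing R] [Nontrivial R] (n : ℕ) :
    Module.finrank R (homogeneousSubmodule σ R n) = (Fintype.card σ + n - 1).choose n := by
  rw [homogeneousSubmodule_eq_finsupp_supported]
  exact (Module.finrank_eq_nat_card_basis (basisRestrictSupport R _)).trans
    (natCard_setOf_degree_eq n)

instance [Finite σ] [CommSemiring R] (n : ℕ) : Module.Finite R (homogeneousSubmodule σ R n) :=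
  Module.Finite.iff_fg.mpr (homogeneousSubmodule_fg σ R n)

theorem pderiv_eq_zero_of_isHomogeneous_zero [CommSemiring R] {p : MvPolynomial σ R}
    (hp : p.IsHomogeneous 0) (i : σ) : pderiv i p = 0 := by
  rw [← totalDegree_zero_iff_isHomogeneous, totalDegree_eq_zero_iff_eq_C] at hp
  rw [hp, pderiv_C]

end MvPolynomial

section PolyLaplacian

variable {d : ℕ}

theorem polyLaplacian_apply (p : MvPolynomial (Fin d) ℝ) :
    polyLaplacian d p = ∑ i, pderiv i (pderiv i p) := by
  simp [polyLaplacian]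

theorem isHomogeneous_polyLaplacian {p : MvPolynomial (Fin d) ℝ} {n : ℕ}
    (hp : p.IsHomogeneous n) : (polyLaplacian d p).IsHomogeneous (n - 2) := by
  rw [polyLaplacian_apply]
  refine IsHomogeneous.sum _ _ _ fun i _ => ?_
  simpa only [Nat.sub_sub] using (hp.pderiv (i := i)).pderiv (i := i)

theorem polyLaplacian_eq_zero_of_isHomogeneous_of_lt_two {p : MvPolynomial (Fin d) ℝ} {n : ℕ}
    (hp : p.IsHomogeneous n) (hn : n < 2) : polyLaplacian d p = 0 := by
  rw [polyLaplacian_apply]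
  refine Finset.sum_eq_zero fun i _ => pderiv_eq_zero_of_isHomogeneous_zero ?_ i
  simpa only [show n - 1 = 0 by omega] using hp.pderiv (i := i)

theorem harmonicSubmodule_eq_of_lt_two {n : ℕ} (hn : n < 2) :
    harmonicSubmodule d n = homogeneousSubmodule (Fin d) ℝ n :=
  inf_eq_left.mpr fun _ hp => polyLaplacian_eq_zero_of_isHomogeneous_of_lt_two hp hn

variable (d) in
noncomputable def normSqPoly : MvPolynomial (Fin d) ℝ := ∑ i, X i ^ 2

theorem isHomogeneous_normSqPoly : (normSqPoly d).IsHomogeneous 2 :=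
  IsHomogeneous.sum _ _ _ fun i _ => isHomogeneous_X_pow i 2

theorem pderiv_normSqPoly (i : Fin d) : pderiv i (normSqPoly d) = 2 * X i := by
  rw [normSqPoly, map_sum, Finset.sum_eq_single i]
  · rw [pderiv_pow, pderiv_X_self]; ring
  · intro j _ hj
    rw [pderiv_pow, pderiv_X_of_ne hj, mul_zero]
  · simp

theorem polyLaplacian_normSqPoly_mul {p : MvPolynomial (Fin d) ℝ} {m : ℕ}
    (hp : p.IsHomogeneous m) :
    polyLaplacian d (normSqPoly d * p) =
      C (2 * d + 4 * m : ℝ) * p + normSqPoly d * polyLaplacian d p := by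
  have hterm (i : Fin d) : pderiv i (pderiv i (normSqPoly d * p)) =
      2 * p + 4 * (X i * pderiv i p) + normSqPoly d * pderiv i (pderiv i p) := by
    have h2 : pderiv i (2 : MvPolynomial (Fin d) ℝ) = 0 := (pderiv i).map_natCast 2
    simp only [Derivation.leibniz, pderiv_normSqPoly, smul_eq_mul, map_add, h2, pderiv_X_self]
    ring
  simp only [polyLaplacian_apply, hterm, Finset.sum_add_distrib, ← Finset.mul_sum,
    hp.sum_X_mul_pderiv]
  simp only [Finset.sum_const, Finset.card_univ, Fintype.card_fin, nsmul_eq_mul, C_add, C_mul,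
    map_ofNat, map_natCast]
  ring

theorem isHomogeneous_normSqPoly_mul {q : MvPolynomial (Fin d) ℝ} {m : ℕ}
    (hq : q.IsHomogeneous m) : (normSqPoly d * q).IsHomogeneous (m + 2) := by
  simpa only [add_comm] using isHomogeneous_normSqPoly.mul hq

theorem exists_isHomogeneous_C_mul_add_normSqPoly_mul_polyLaplacian_eq (m : ℕ) {a : ℝ}
    (ha : 0 < a) {y : MvPolynomial (Fin d) ℝ} (hy : y.IsHomogeneous m) :
    ∃ q : MvPolynomial (Fin d) ℝ,
      q.IsHomogeneous m ∧ C a * q + normSqPoly d * polyLaplacian d q = y := by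
  induction m using Nat.strong_induction_on generalizing a y with
  | _ m ih =>
  have hCa : C a * C a⁻¹ = (1 : MvPolynomial (Fin d) ℝ) := by
    rw [← C_mul, mul_inv_cancel₀ ha.ne', C_1]
  rcases lt_or_ge m 2 with hm | hm
  · refine ⟨C a⁻¹ * y, hy.C_mul _, ?_⟩
    rw [polyLaplacian_eq_zero_of_isHomogeneous_of_lt_two (hy.C_mul _) hm]
    linear_combination y * hCa
  · obtain ⟨k, rfl⟩ : ∃ k, m = k + 2 := ⟨m - 2, by omega⟩
    -- Solve one degree lower for `z = Δq`, then recover `q` from `a q = y - |x|² z`.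
    have hc : 0 < a + (2 * d + 4 * k : ℝ) := by positivity
    obtain ⟨z, hz, hz_eq⟩ := ih k (by omega) hc (isHomogeneous_polyLaplacian hy)
    refine ⟨C a⁻¹ * (y - normSqPoly d * z),
      (hy.sub (isHomogeneous_normSqPoly_mul hz)).C_mul _, ?_⟩
    have hlap : polyLaplacian d (C a⁻¹ * (y - normSqPoly d * z)) = C a⁻¹ *
        (polyLaplacian d y - (C (2 * d + 4 * k : ℝ) * z + normSqPoly d * polyLaplacian d z)) := by
      rw [← smul_eq_C_mul, map_smul, map_sub, polyLaplacian_normSqPoly_mul hz, smul_eq_C_mul]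
    rw [hlap]
    rw [C_add] at hz_eq
    linear_combination (-(normSqPoly d * C a⁻¹)) * hz_eq + y * hCa

theorem map_polyLaplacian_homogeneousSubmodule (hd : 0 < d) (m : ℕ) :
    (homogeneousSubmodule (Fin d) ℝ (m + 2)).map (polyLaplacian d) =
      homogeneousSubmodule (Fin d) ℝ m := by
  refine le_antisymm (Submodule.map_le_iff_le_comap.mpr fun p hp => ?_) fun y hy => ?_
  · simpa using isHomogeneous_polyLaplacian (n := m + 2) hp
  · have ha : 0 < (2 * d + 4 * m : ℝ) := by positivity
    obtain ⟨q, hq, hq_eq⟩ :=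
      exists_isHomogeneous_C_mul_add_normSqPoly_mul_polyLaplacian_eq m ha hy
    exact ⟨normSqPoly d * q, isHomogeneous_normSqPoly_mul hq,
      (polyLaplacian_normSqPoly_mul hq).trans hq_eq⟩

end PolyLaplacian

/-- `dim H_n^d = C(n+d-1, n) - C(n+d-3, n-2)`, the second term being `0` for `n = 0, 1`. -/
theorem finrank_harmonicSubmodule (d n : ℕ) (hd : 2 ≤ d) :
    Module.finrank ℝ (harmonicSubmodule d n) =
      (n + d - 1).choose n - (if 2 ≤ n then (n + d - 3).choose (n - 2) else 0) := by
  rcases lt_or_ge n 2 with hn | hn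
  · rw [if_neg (by omega), harmonicSubmodule_eq_of_lt_two hn, finrank_homogeneousSubmodule,
      Fintype.card_fin, add_comm d n, Nat.sub_zero]
  · obtain ⟨m, rfl⟩ : ∃ m, n = m + 2 := ⟨n - 2, by omega⟩
    have h := (polyLaplacian d).finrank_map_add_finrank_inf_ker
      (homogeneousSubmodule (Fin d) ℝ (m + 2))
    rw [map_polyLaplacian_homogeneousSubmodule (by omega), finrank_homogeneousSubmodule,
      finrank_homogeneousSubmodule, Fintype.card_fin] at h
    rw [if_pos hn, harmonicSubmodule, Nat.add_sub_cancel,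
      show m + 2 + d - 3 = d + m - 1 by omega, show m + 2 + d - 1 = d + (m + 2) - 1 by omega]
    omega
end

section
/- Let d ≥ 2, n ≥ 0, and Y ∈ H_n^d. Define F : ℝ^d \ {0} → ℝ by F(x) = Y(x/‖x‖) = ‖x‖^{−n} Y(x). Then F is smooth on ℝ^d \ {0} and ΔF(x) = −n(n + d − 2) ‖x‖^{−2} F(x) for every x ≠ 0; in particular, restricted to the unit sphere this says that Y is an eigenfunction of the Laplace–Beltrami operator Δ_0 with eigenvalue −n(n + d − 2). -/
open MeasureTheory MvPolynomial Metric

/-- A polynomial is harmonic if it is annihilated by the Laplacian. -/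
def IsHarmonic {d : ℕ} (p : MvPolynomial (Fin d) ℝ) : Prop := polyLaplacian d p = 0

/-- The Laplacian `Δ = ∂₁² + ⋯ + ∂_d²` of a function on `ℝ^d`, written with
iterated (Fréchet) derivatives in the coordinate directions. -/
noncomputable def fnLaplacian {d : ℕ} (f : EuclideanSpace ℝ (Fin d) → ℝ)
    (x : EuclideanSpace ℝ (Fin d)) : ℝ :=
  ∑ i : Fin d,
    fderiv ℝ (fun y => fderiv ℝ f y (EuclideanSpace.single i 1)) x (EuclideanSpace.single i 1)


namespace SHAux

variable {d : ℕ}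

noncomputable def pev (p : MvPolynomial (Fin d) ℝ) (x : EuclideanSpace ℝ (Fin d)) : ℝ :=
  eval (fun i => x i) p

noncomputable def pgrad (p : MvPolynomial (Fin d) ℝ) (x : EuclideanSpace ℝ (Fin d)) :
    EuclideanSpace ℝ (Fin d) →L[ℝ] ℝ :=
  ∑ i, pev (pderiv i p) x • (EuclideanSpace.proj i : EuclideanSpace ℝ (Fin d) →L[ℝ] ℝ)

lemma pgrad_apply (p : MvPolynomial (Fin d) ℝ) (x v : EuclideanSpace ℝ (Fin d)) :
    pgrad p x v = ∑ i, pev (pderiv i p) x * v i := by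
  simp [pgrad, ContinuousLinearMap.sum_apply]

lemma pgrad_single (p : MvPolynomial (Fin d) ℝ) (x : EuclideanSpace ℝ (Fin d)) (i : Fin d) :
    pgrad p x (EuclideanSpace.single i 1) = pev (pderiv i p) x := by
  simp [pgrad_apply, EuclideanSpace.single_apply]

lemma hasFDerivAt_pev (p : MvPolynomial (Fin d) ℝ) (x : EuclideanSpace ℝ (Fin d)) :
    HasFDerivAt (pev p) (pgrad p x) x := by
  induction p using MvPolynomial.induction_on with
  | C a =>
    have h1 : pev (C a : MvPolynomial (Fin d) ℝ) = fun _ => a := funext fun y => by simp [pev]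
    have h0 : pgrad (C a : MvPolynomial (Fin d) ℝ) x = 0 := by
      ext v; simp [pgrad_apply, pev]
    rw [h1, h0]; exact hasFDerivAt_const a x
  | add p q hp hq =>
    have h1 : pev (p + q) = fun y => pev p y + pev q y := funext fun y => by simp [pev]
    have h0 : pgrad (p + q) x = pgrad p x + pgrad q x := by
      ext v; simp [pgrad_apply, pev, add_mul, Finset.sum_add_distrib]
    rw [h1, h0]; exact hp.add hq
  | mul_X p j hp =>
    have hXj : HasFDerivAt (fun y : EuclideanSpace ℝ (Fin d) => y j)
        (EuclideanSpace.proj j : EuclideanSpace ℝ (Fin d) →L[ℝ] ℝ) x :=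
      by simpa using (EuclideanSpace.proj (𝕜 := ℝ) (ι := Fin d) j).hasFDerivAt (x := x)
    have h1 : pev (p * X j) = fun y => pev p y * y j := funext fun y => by simp [pev]
    have h0 : pgrad (p * X j) x
        = pev p x • (EuclideanSpace.proj j : EuclideanSpace ℝ (Fin d) →L[ℝ] ℝ)
          + x j • pgrad p x := by
      ext v
      simp [pgrad_apply, pderiv_mul, pderiv_X, Pi.single_apply, pev,
        apply_ite (eval fun i => (x : Fin d → ℝ) i), add_mul, Finset.sum_add_distrib,
        Finset.mul_sum, mul_ite, ite_mul, mul_zero, zero_mul, mul_one,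
        Finset.sum_ite_eq, Finset.sum_ite_eq']
      exact Finset.sum_congr rfl fun i _ => by ring
    rw [h1, h0]; exact hp.mul hXj

lemma contDiff_pev (p : MvPolynomial (Fin d) ℝ) : ContDiff ℝ (⊤ : ℕ∞) (pev (d := d) p) := by
  induction p using MvPolynomial.induction_on with
  | C a =>
    have h1 : pev (C a : MvPolynomial (Fin d) ℝ) = fun _ => a := funext fun y => by simp [pev]
    rw [h1]; exact contDiff_const
  | add p q hp hq =>
    have h1 : pev (p + q) = fun y => pev p y + pev q y := funext fun y => by simp [pev]
    rw [h1]; exact hp.add hq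
  | mul_X p j hp =>
    have h1 : pev (p * X j) = fun y => pev p y * y j := funext fun y => by simp [pev]
    rw [h1]; exact hp.mul (EuclideanSpace.proj (𝕜 := ℝ) (ι := Fin d) j).contDiff


lemma eval_scale {p : MvPolynomial (Fin d) ℝ} {m : ℕ} (hp : p.IsHomogeneous m) (c : ℝ)
    (x : Fin d → ℝ) : eval (fun i => c * x i) p = c ^ m * eval x p := by
  rw [eval_eq, eval_eq, Finset.mul_sum]
  refine Finset.sum_congr rfl fun D hD => ?_
  have hdeg : D.degree = m := by
    by_contra h
    exact (mem_support_iff.mp hD) (hp.coeff_eq_zero h)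
  replace hdeg : ∑ i ∈ D.support, D i = m := hdeg
  rw [← hdeg]
  simp only [mul_pow, Finset.prod_mul_distrib, Finset.prod_pow_eq_pow_sum]
  ring

lemma euler {Y : MvPolynomial (Fin d) ℝ} {m : ℕ} (hY : Y.IsHomogeneous m)
    (x : EuclideanSpace ℝ (Fin d)) :
    ∑ i, x i * pev (pderiv i Y) x = m * pev Y x := by
  have hline : HasDerivAt (fun t : ℝ => t • x) x 1 := by
    simpa using (hasDerivAt_id (1 : ℝ)).smul_const x
  have h1 : HasDerivAt (fun t : ℝ => pev Y (t • x)) (pgrad Y x x) 1 := by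
    have h := (hasFDerivAt_pev Y ((1 : ℝ) • x)).comp_hasDerivAt 1 hline
    rw [one_smul] at h; exact h
  have h2 : HasDerivAt (fun t : ℝ => pev Y (t • x)) (m * pev Y x) 1 := by
    have hfun : (fun t : ℝ => pev Y (t • x)) = fun t : ℝ => t ^ m * pev Y x := by
      funext t
      have := eval_scale hY t (fun i => x i)
      simpa [pev, PiLp.smul_apply, smul_eq_mul] using this
    rw [hfun]
    simpa using (hasDerivAt_pow m (1 : ℝ)).mul_const (pev Y x)
  have := h1.unique h2
  rw [pgrad_apply] at this
  rw [← this]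
  exact Finset.sum_congr rfl fun i _ => mul_comm _ _

noncomputable def Qp (d : ℕ) : MvPolynomial (Fin d) ℝ := ∑ i, X i * X i

lemma pev_Qp (x : EuclideanSpace ℝ (Fin d)) : pev (Qp d) x = ‖x‖ ^ 2 := by
  have : ‖x‖ ^ 2 = ∑ i, x i ^ 2 := by
    rw [EuclideanSpace.norm_eq, Real.sq_sqrt (by positivity)]
    simp [sq_abs]
  rw [this]
  simp [pev, Qp, sq]

lemma pev_Qp_pos {x : EuclideanSpace ℝ (Fin d)} (hx : x ≠ 0) : 0 < pev (Qp d) x := by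
  rw [pev_Qp]; exact pow_pos (norm_pos_iff.mpr hx) 2

lemma pev_pderiv_Qp (x : EuclideanSpace ℝ (Fin d)) (i : Fin d) :
    pev (pderiv i (Qp d)) x = 2 * x i := by
  simp [Qp, pev, pderiv_mul, pderiv_X, Pi.single_apply,
    apply_ite (eval fun j => (x : Fin d → ℝ) j), mul_ite, ite_mul, mul_zero, zero_mul, mul_one,
    Finset.sum_add_distrib, Finset.sum_ite_eq, Finset.sum_ite_eq']
  ring

noncomputable def gfun (d : ℕ) (a : ℝ) (p : MvPolynomial (Fin d) ℝ)
    (y : EuclideanSpace ℝ (Fin d)) : ℝ := pev (Qp d) y ^ a * pev p y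

lemma hasFDerivAt_gfun (a : ℝ) (p : MvPolynomial (Fin d) ℝ) {x : EuclideanSpace ℝ (Fin d)}
    (hx : x ≠ 0) :
    HasFDerivAt (gfun d a p)
      ((pev (Qp d) x ^ a) • pgrad p x
        + pev p x • ((a * pev (Qp d) x ^ (a - 1)) • pgrad (Qp d) x)) x := by
  have hq : pev (Qp d) x ≠ 0 := ne_of_gt (pev_Qp_pos hx)
  have h1 : HasDerivAt (fun t : ℝ => t ^ a) (a * pev (Qp d) x ^ (a - 1)) (pev (Qp d) x) :=
    (Real.hasStrictDerivAt_rpow_const (Or.inl hq)).hasDerivAt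
  have h2 : HasFDerivAt (fun y => pev (Qp d) y ^ a)
      ((a * pev (Qp d) x ^ (a - 1)) • pgrad (Qp d) x) x :=
    h1.comp_hasFDerivAt x (hasFDerivAt_pev (Qp d) x)
  exact h2.mul (hasFDerivAt_pev p x)

lemma fderiv_gfun_single (a : ℝ) (p : MvPolynomial (Fin d) ℝ) {x : EuclideanSpace ℝ (Fin d)}
    (hx : x ≠ 0) (i : Fin d) :
    fderiv ℝ (gfun d a p) x (EuclideanSpace.single i 1)
      = pev (Qp d) x ^ a * pev (pderiv i p) x
        + a * pev (Qp d) x ^ (a - 1) * (2 * x i) * pev p x := by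
  rw [(hasFDerivAt_gfun a p hx).fderiv]
  simp [pgrad_single, pev_pderiv_Qp]
  ring

end SHAux

lemma pev_Qp' {d : ℕ} (x : EuclideanSpace ℝ (Fin d)) :
    SHAux.pev (SHAux.Qp d) x = ∑ i, x i * x i := by
  simp [SHAux.pev, SHAux.Qp]

/-- Spherical harmonics are eigenfunctions of the Laplace–Beltrami operator: if `Y ∈ H_n^d`
and `F(x) = Y(x/‖x‖)`, then `F` is smooth away from `0` and
`ΔF(x) = −n(n+d−2)‖x‖^{-2} F(x)` for `x ≠ 0`. -/
theorem spherical_harmonic_eigenfunction (d n : ℕ) (hd : 2 ≤ d)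
    (Y : MvPolynomial (Fin d) ℝ) (hY : Y.IsHomogeneous n) (hY' : IsHarmonic Y) :
    ContDiffOn ℝ (⊤ : ℕ∞) (fun x : EuclideanSpace ℝ (Fin d) =>
        MvPolynomial.eval (fun i => x i / ‖x‖) Y) {x | x ≠ 0} ∧
    ∀ x : EuclideanSpace ℝ (Fin d), x ≠ 0 →
      fnLaplacian (fun y : EuclideanSpace ℝ (Fin d) =>
          MvPolynomial.eval (fun i => y i / ‖y‖) Y) x =
        -(n * (n + d - 2) : ℝ) * ‖x‖ ^ (-2 : ℝ) *
          MvPolynomial.eval (fun i => x i / ‖x‖) Y := by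
  classical
  set c : ℝ := -(n : ℝ) / 2 with hc
  have key : ∀ y : EuclideanSpace ℝ (Fin d), y ≠ 0 →
      MvPolynomial.eval (fun i => y i / ‖y‖) Y = SHAux.gfun d c Y y := by
    intro y hy
    have h1 : (fun i : Fin d => y i / ‖y‖) = fun i => ‖y‖⁻¹ * y i := by
      funext i; rw [div_eq_inv_mul]
    rw [h1, SHAux.eval_scale hY]
    have h2 : SHAux.pev (SHAux.Qp d) y ^ c = ‖y‖⁻¹ ^ n := by
      rw [SHAux.pev_Qp, ← Real.rpow_natCast ‖y‖ 2, ← Real.rpow_mul (norm_nonneg y)]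
      have h3 : ((2 : ℕ) : ℝ) * c = -(n : ℝ) := by rw [hc]; push_cast; ring
      rw [h3, Real.rpow_neg (norm_nonneg y), Real.rpow_natCast, inv_pow]
    rw [SHAux.gfun, h2]
    rfl
  have hS : IsOpen {y : EuclideanSpace ℝ (Fin d) | y ≠ 0} := isOpen_ne
  constructor
  · refine ContDiffOn.congr ?_ (fun y hy => key y hy)
    intro y hy
    have hq : SHAux.pev (SHAux.Qp d) y ≠ 0 := ne_of_gt (SHAux.pev_Qp_pos hy)
    have h1 : ContDiffAt ℝ (⊤ : ℕ∞) (fun t : ℝ => t ^ c) (SHAux.pev (SHAux.Qp d) y) :=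
      Real.contDiffAt_rpow_const_of_ne hq
    exact (((h1.comp y (SHAux.contDiff_pev (SHAux.Qp d)).contDiffAt).mul
      (SHAux.contDiff_pev Y).contDiffAt)).contDiffWithinAt
  · intro x hx
    have hq := SHAux.pev_Qp_pos (d := d) hx
    have hq0 : SHAux.pev (SHAux.Qp d) x ≠ 0 := ne_of_gt hq
    have hd1 : ∀ y : EuclideanSpace ℝ (Fin d), y ≠ 0 → ∀ i : Fin d,
        fderiv ℝ (fun z : EuclideanSpace ℝ (Fin d) =>
            MvPolynomial.eval (fun j => z j / ‖z‖) Y) y (EuclideanSpace.single i 1)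
          = 2 * c * SHAux.gfun d (c - 1) (X i * Y) y + SHAux.gfun d c (pderiv i Y) y := by
      intro y hy i
      have hev : (fun z : EuclideanSpace ℝ (Fin d) =>
          MvPolynomial.eval (fun j => z j / ‖z‖) Y) =ᶠ[nhds y] SHAux.gfun d c Y :=
        Filter.eventuallyEq_of_mem (hS.mem_nhds hy) (fun z hz => key z hz)
      rw [hev.fderiv_eq, SHAux.fderiv_gfun_single c Y hy i]
      have hXY : SHAux.pev (X i * Y) y = y i * SHAux.pev Y y := by simp [SHAux.pev]
      simp only [SHAux.gfun, hXY]
      ring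
    have hterm : ∀ i : Fin d,
        fderiv ℝ (fun y => fderiv ℝ (fun z : EuclideanSpace ℝ (Fin d) =>
            MvPolynomial.eval (fun j => z j / ‖z‖) Y) y (EuclideanSpace.single i 1)) x
          (EuclideanSpace.single i 1)
        = 2 * c * SHAux.pev (SHAux.Qp d) x ^ (c - 1) * SHAux.pev Y x
          + 4 * c * SHAux.pev (SHAux.Qp d) x ^ (c - 1)
              * (x i * SHAux.pev (pderiv i Y) x)
          + 4 * c * (c - 1) * SHAux.pev (SHAux.Qp d) x ^ (c - 2) * SHAux.pev Y x
              * (x i * x i)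
          + SHAux.pev (SHAux.Qp d) x ^ c * SHAux.pev (pderiv i (pderiv i Y)) x := by
      intro i
      have hev2 : (fun y => fderiv ℝ (fun z : EuclideanSpace ℝ (Fin d) =>
            MvPolynomial.eval (fun j => z j / ‖z‖) Y) y (EuclideanSpace.single i 1))
          =ᶠ[nhds x] (fun y =>
            2 * c * SHAux.gfun d (c - 1) (X i * Y) y + SHAux.gfun d c (pderiv i Y) y) :=
        Filter.eventuallyEq_of_mem (hS.mem_nhds hx) (fun z hz => hd1 z hz i)
      rw [hev2.fderiv_eq]
      have da := (SHAux.hasFDerivAt_gfun (c - 1) (X i * Y) hx).differentiableAt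
      have db := (SHAux.hasFDerivAt_gfun c (pderiv i Y) hx).differentiableAt
      rw [fderiv_fun_add (da.const_mul (2 * c)) db, fderiv_const_mul da (2 * c)]
      rw [ContinuousLinearMap.add_apply, ContinuousLinearMap.smul_apply]
      rw [SHAux.fderiv_gfun_single (c - 1) (X i * Y) hx i,
        SHAux.fderiv_gfun_single c (pderiv i Y) hx i]
      have he : c - 1 - 1 = c - 2 := by ring
      rw [he]
      have hp1 : SHAux.pev (pderiv i (X i * Y)) x
          = SHAux.pev Y x + x i * SHAux.pev (pderiv i Y) x := by
        rw [pderiv_mul, pderiv_X_self]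
        simp [SHAux.pev]
      have hp2 : SHAux.pev (X i * Y) x = x i * SHAux.pev Y x := by simp [SHAux.pev]
      rw [hp1, hp2]
      simp only [smul_eq_mul]
      ring
    have hlap : ∑ i, SHAux.pev (pderiv i (pderiv i Y)) x = 0 := by
      have h0 : SHAux.pev (polyLaplacian d Y) x = 0 := by
        rw [hY']; simp [SHAux.pev]
      rw [polyLaplacian] at h0
      simpa [SHAux.pev, LinearMap.sum_apply, LinearMap.comp_apply] using h0
    have heuler : ∑ i, x i * SHAux.pev (pderiv i Y) x = n * SHAux.pev Y x :=
      SHAux.euler hY x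
    have hnorm : ‖x‖ ^ (-2 : ℝ) = (SHAux.pev (SHAux.Qp d) x)⁻¹ := by
      rw [SHAux.pev_Qp,
        show (-2 : ℝ) = ((2 : ℕ) : ℝ) * (-1) by norm_num,
        Real.rpow_mul (norm_nonneg x), Real.rpow_natCast, Real.rpow_neg_one]
    have f1 : SHAux.pev (SHAux.Qp d) x ^ (c - 1)
        = SHAux.pev (SHAux.Qp d) x ^ c * (SHAux.pev (SHAux.Qp d) x)⁻¹ := by
      rw [eq_mul_inv_iff_mul_eq₀ hq0, ← Real.rpow_add_one hq0, sub_add_cancel]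
    have f2 : SHAux.pev (SHAux.Qp d) x ^ (c - 2)
        = SHAux.pev (SHAux.Qp d) x ^ c * (SHAux.pev (SHAux.Qp d) x)⁻¹
            * (SHAux.pev (SHAux.Qp d) x)⁻¹ := by
      rw [← f1, eq_mul_inv_iff_mul_eq₀ hq0, ← Real.rpow_add_one hq0,
        show c - 2 + 1 = c - 1 by ring]
    simp only [fnLaplacian]
    rw [Finset.sum_congr rfl (fun i _ => hterm i)]
    rw [Finset.sum_add_distrib, Finset.sum_add_distrib, Finset.sum_add_distrib]
    rw [Finset.sum_const, Finset.card_univ, Fintype.card_fin, nsmul_eq_mul,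
      ← Finset.mul_sum, ← Finset.mul_sum, ← Finset.mul_sum,
      heuler, ← pev_Qp', hlap, key x hx, hnorm]
    simp only [SHAux.gfun]
    rw [f1, f2, hc]
    field_simp
    ring
end
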